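/- arXiv:0706.2455 — 2 statements merged into one kernel-verified Lean document; each statement's English description precedes it below -/
import Mathlib

section
/- Let 𝔞 be a nonzero fractional ideal of L and 𝔞^∨ its trace dual. Fix τ = (τ₁,…,τ_g) ∈ ℍ^g and let φ_τ : 𝔞^∨ ⊕ 𝔞 → ℂ^g be the additive map (a',a) ↦ (σ_k(a') + σ_k(a)τ_k)_{1≤k≤g}. Then φ_τ is injective, and for any ℤ-bases (α'₁,…,α'_g) of 𝔞^∨ and (α₁,…,α_g) of 𝔞, the 2g vectors φ_τ(α'_j,0), φ_τ(0,α_j) (1 ≤ j ≤ g) form a basis of ℂ^g viewed as a 2g-dimensional real vector space; equivalently, the ℝ-linear extension φ_τ ⊗ ℝ : (𝔞^∨ ⊕ 𝔞) ⊗_ℤ ℝ → ℂ^g is an isomorphism of real vector spaces. -/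
open NumberField
open scoped nonZeroDivisors

/-- The trace dual `𝔞^∨ = {x ∈ L : Tr_{L/ℚ}(x·a) ∈ ℤ for all a ∈ 𝔞}` of a set `𝔞 ⊆ L`. -/
def traceDualSet (L : Type*) [Field L] [NumberField L] (S : Set L) : Set L :=
  {x | ∀ a ∈ S, ∃ n : ℤ, Algebra.trace ℚ L (x * a) = (n : ℚ)}

/-- `IsZBasisOf α S`: the family `α` is a ℤ-basis of the subset `S` of `L`. -/
def IsZBasisOf {L : Type*} [Field L] [NumberField L] {ι : Type*} (α : ι → L) (S : Set L) : Prop :=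
  (∀ j, α j ∈ S) ∧ LinearIndependent ℤ α ∧ ∀ x ∈ S, x ∈ Submodule.span ℤ (Set.range α)

/-! The map `φ_τ` factors as `(a', a) ↦ (σ(a'), σ(a)) ∈ ℝ^g × ℝ^g` followed by the ℝ-linear map
`(x, y) ↦ (x_k + y_k τ_k)_k`, which is injective because `Im τ_k ≠ 0`. A ℚ-basis `b` of `L` has an
invertible real embedding matrix `(σ_k(b_j))`, as its squared determinant is the discriminant
of `b`. Hence ℤ-bases of `𝔞^∨` and `𝔞` are sent to `2g` independent vectors of the
`2g`-dimensional real space `ℂ^g`. -/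

theorem linearIndependent_realEmbeddings {L ι : Type*} [Field L] [NumberField L] [Fintype ι]
    [DecidableEq ι] {σ : ι → (L →+* ℝ)} (hσ : Function.Injective σ)
    (hcard : Fintype.card ι = Module.finrank ℚ L) {b : ι → L} (hb : LinearIndependent ℚ b) :
    LinearIndependent ℝ (fun j k => σ k (b j)) := by
  let e : ι ≃ (L →ₐ[ℚ] ℂ) := by
    refine Equiv.ofBijective (fun k => RingHom.equivRatAlgHom L ℂ (Complex.ofRealHom.comp (σ k)))
      ((Fintype.bijective_iff_injective_and_card _).mpr ⟨fun i j hij => hσ ?_, ?_⟩)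
    · exact RingHom.ext fun x => Complex.ofReal_injective
        (RingHom.congr_fun ((RingHom.equivRatAlgHom L ℂ).injective hij) x)
    · rw [AlgHom.card, hcard]
  let M : Matrix ι ι ℝ := Matrix.of fun j k => σ k (b j)
  have hM : M.map Complex.ofRealHom = Algebra.embeddingsMatrixReindex ℚ ℂ b e := rfl
  have : Nonempty ι := Fintype.card_pos_iff.mp (hcard ▸ Module.finrank_pos)
  have hdiscr : Algebra.discr ℚ b ≠ 0 := by
    simpa using Algebra.discr_not_zero_of_basis ℚ (basisOfLinearIndependentOfCardEqFinrank hb hcard)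
  refine Matrix.linearIndependent_rows_of_det_ne_zero (A := M) fun hdet => hdiscr ?_
  have := Algebra.discr_eq_det_embeddingsMatrixReindex_pow_two ℚ ℂ b e
  rw [← hM, ← RingHom.mapMatrix_apply, ← RingHom.map_det, hdet] at this
  simpa using this

section

variable {κ : Type*} (τ : κ → ℂ)

def ofRealAddMul : (κ → ℝ) × (κ → ℝ) →ₗ[ℝ] (κ → ℂ) where
  toFun x k := x.1 k + x.2 k * τ k
  map_add' x y := by ext k; push_cast [Prod.fst_add, Prod.snd_add, Pi.add_apply]; ring
  map_smul' c x := by ext k; simp only [Prod.smul_fst, Prod.smul_snd, Pi.smul_apply, smul_eq_mul,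
    Complex.ofReal_mul, RingHom.id_apply, Complex.real_smul]; ring

theorem ofRealAddMul_apply (x : (κ → ℝ) × (κ → ℝ)) (k : κ) :
    ofRealAddMul τ x k = x.1 k + x.2 k * τ k := rfl

variable {τ}

theorem ofRealAddMul_injective (hτ : ∀ k, (τ k).im ≠ 0) : Function.Injective (ofRealAddMul τ) := by
  refine (injective_iff_map_eq_zero _).mpr fun x hx => ?_
  have hk k : (x.1 k : ℂ) + x.2 k * τ k = 0 := congrFun hx k
  have h2 k : x.2 k = 0 := by
    simpa [hτ k] using congrArg Complex.im (hk k)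
  have h1 k : x.1 k = 0 := by
    simpa [h2 k] using hk k
  exact Prod.ext (funext h1) (funext h2)

end

theorem phi_tau_injective_and_real_basis_general
    (L : Type*) [Field L] [NumberField L] (g : ℕ)
    (σ : Fin g → (L →+* ℝ)) (hσ : Function.Bijective σ)
    (hdeg : Module.finrank ℚ L = g)
    (𝔞 : FractionalIdeal (𝓞 L)⁰ L)
    (τ : Fin g → ℂ) (hτ : ∀ k, 0 < (τ k).im)
    (φ : L × L → (Fin g → ℂ))
    (hφ : ∀ p k, φ p k = (σ k p.1 : ℂ) + (σ k p.2 : ℂ) * τ k) :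
    (∀ p q : L × L,
      p.1 ∈ traceDualSet L (𝔞 : Set L) → p.2 ∈ (𝔞 : Set L) →
      q.1 ∈ traceDualSet L (𝔞 : Set L) → q.2 ∈ (𝔞 : Set L) →
      φ p = φ q → p = q) ∧
    (∀ α' α : Fin g → L,
      IsZBasisOf α' (traceDualSet L (𝔞 : Set L)) → IsZBasisOf α (𝔞 : Set L) →
      LinearIndependent ℝ
        (Sum.elim (fun j => φ (α' j, 0)) (fun j => φ (0, α j)) :
          Fin g ⊕ Fin g → (Fin g → ℂ)) ∧
      Submodule.span ℝ
        (Set.range (Sum.elim (fun j => φ (α' j, 0)) (fun j => φ (0, α j)) :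
          Fin g ⊕ Fin g → (Fin g → ℂ))) = ⊤) := by
  let E : L → (Fin g → ℝ) := fun a k => σ k a
  have hφE p : φ p = ofRealAddMul τ (E p.1, E p.2) := funext (hφ p)
  have hinj := ofRealAddMul_injective fun k => (hτ k).ne'
  have hg : Nonempty (Fin g) := ⟨⟨0, hdeg ▸ Module.finrank_pos⟩⟩
  refine ⟨fun p q _ _ _ _ hpq => ?_, fun α' α hα' hα => ?_⟩
  · rw [hφE, hφE] at hpq
    obtain ⟨h1, h2⟩ := Prod.ext_iff.mp (hinj hpq)
    exact Prod.ext ((σ hg.some).injective (congrFun h1 _)) ((σ hg.some).injective (congrFun h2 _))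
  have hcard : Fintype.card (Fin g) = Module.finrank ℚ L := by simp [hdeg]
  have hE {b : Fin g → L} (hb : LinearIndependent ℤ b) : LinearIndependent ℝ (E ∘ b) :=
    linearIndependent_realEmbeddings hσ.1 hcard ((LinearIndependent.iff_fractionRing ℤ ℚ).mp hb)
  have hfamily : (Sum.elim (fun j => φ (α' j, 0)) (fun j => φ (0, α j))) =
      ofRealAddMul τ ∘ Sum.elim (LinearMap.inl ℝ _ _ ∘ E ∘ α') (LinearMap.inr ℝ _ _ ∘ E ∘ α) := by
    ext (j | j) k <;> simp [hφ, ofRealAddMul_apply, E]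
  have hli : LinearIndependent ℝ (Sum.elim (fun j => φ (α' j, 0)) (fun j => φ (0, α j))) := by
    rw [hfamily]
    exact (linearIndependent_inl_union_inr' (hE hα'.2.1) (hE hα.2.1)).map' _
      (LinearMap.ker_eq_bot.mpr hinj)
  refine ⟨hli, hli.span_eq_top_of_card_eq_finrank ?_⟩
  simp only [Fintype.card_sum, Fintype.card_fin, Module.finrank_pi_fintype,
    Complex.finrank_real_complex, Finset.sum_const, Finset.card_univ, smul_eq_mul]
  omega

/-- for `τ ∈ ℍ^g`, the map `φ_τ(a',a) = (σ_k(a') + σ_k(a)τ_k)_k` is injective on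
`Π = 𝔞^∨ ⊕ 𝔞`, and for ℤ-bases `(α'_j)` of `𝔞^∨` and `(α_j)` of `𝔞`, the `2g` vectors
`φ_τ(α'_j,0)`, `φ_τ(0,α_j)` form a basis of `ℂ^g` as a real vector space. -/
theorem phi_tau_injective_and_real_basis
    (L : Type*) [Field L] [NumberField L] (g : ℕ)
    (σ : Fin g → (L →+* ℝ)) (hσ : Function.Bijective σ)
    (hdeg : Module.finrank ℚ L = g)
    (𝔞 : FractionalIdeal (𝓞 L)⁰ L) (h𝔞 : 𝔞 ≠ 0)
    (τ : Fin g → ℂ) (hτ : ∀ k, 0 < (τ k).im)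
    (φ : L × L → (Fin g → ℂ))
    (hφ : ∀ p k, φ p k = (σ k p.1 : ℂ) + (σ k p.2 : ℂ) * τ k) :
    (∀ p q : L × L,
      p.1 ∈ traceDualSet L (𝔞 : Set L) → p.2 ∈ (𝔞 : Set L) →
      q.1 ∈ traceDualSet L (𝔞 : Set L) → q.2 ∈ (𝔞 : Set L) →
      φ p = φ q → p = q) ∧
    (∀ α' α : Fin g → L,
      IsZBasisOf α' (traceDualSet L (𝔞 : Set L)) → IsZBasisOf α (𝔞 : Set L) →
      LinearIndependent ℝ
        (Sum.elim (fun j => φ (α' j, 0)) (fun j => φ (0, α j)) :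
          Fin g ⊕ Fin g → (Fin g → ℂ)) ∧
      Submodule.span ℝ
        (Set.range (Sum.elim (fun j => φ (α' j, 0)) (fun j => φ (0, α j)) :
          Fin g ⊕ Fin g → (Fin g → ℂ))) = ⊤) :=
  phi_tau_injective_and_real_basis_general L g σ hσ hdeg 𝔞 τ hτ φ hφ
end

section
/- Assume g ≥ 2, let N ≥ 3 be an integer and U_{L,N} the group of units of O_L congruent to 1 modulo N·O_L. If (n₁,…,n_g) ∈ ℕ^g is a tuple of nonnegative integers that are not all equal, then there exists ε ∈ U_{L,N} such that Π_{k=1}^{g} σ_k(ε)^{n_k} ≠ 1. -/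
/-!
If the character `ε ↦ ∏ σ_k(ε)^{n_k}` were trivial on `U_{L,N}`, taking `log |·|` would make
`∑_w c_w log w(ε)`, with `c_w = n_k` at the place of `σ_k`, vanish on `U_{L,N}`, hence, the index
being finite, on all units. By the product formula this sum is a linear form evaluated on the log
embedding of `ε`, whose image spans by Dirichlet's unit theorem; so the form is zero and all the
`c_w` are equal.
-/

open NumberField NumberField.InfinitePlace NumberField.Units NumberField.Units.dirichletUnitTheorem

theorem Ideal.exists_pow_sub_one_mem {R : Type*} [CommRing R] (I : Ideal R) [Finite (R ⧸ I)]
    (u : Rˣ) : ∃ m, 0 < m ∧ ((u ^ m : Rˣ) : R) - 1 ∈ I := by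
  set q := Units.map (Ideal.Quotient.mk I : R →* R ⧸ I) u
  refine ⟨orderOf q, orderOf_pos q, Ideal.Quotient.eq.mp ?_⟩
  rw [map_one, Units.val_pow_eq_pow_val, map_pow]
  exact congrArg Units.val (pow_orderOf_eq_one q)

namespace NumberField.InfinitePlace

variable {K : Type*} [Field K]

theorem mk_ofReal_comp_apply (r : K →+* ℝ) (x : K) : mk (Complex.ofRealHom.comp r) x = |r x| := by
  simp [apply]

theorem isReal_mk_ofReal_comp (r : K →+* ℝ) : IsReal (mk (Complex.ofRealHom.comp r)) :=
  isReal_mk_iff.mpr <| ComplexEmbedding.isReal_iff.mpr <| by ext; simp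

theorem mk_ofReal_comp_injective :
    Function.Injective fun r : K →+* ℝ ↦ mk (Complex.ofRealHom.comp r) := by
  intro r s h
  have hr : ComplexEmbedding.conjugate (Complex.ofRealHom.comp r) = Complex.ofRealHom.comp r := by
    ext; simp
  have hrs : Complex.ofRealHom.comp r = Complex.ofRealHom.comp s := by
    rcases mk_eq_iff.mp h with h | h
    · exact h
    · rwa [hr] at h
  ext x
  simpa using RingHom.congr_fun hrs x

variable [NumberField K]

theorem mk_ofReal_comp_bijective (h : Nat.card (K →+* ℝ) = Module.finrank ℚ K) :
    Function.Bijective fun r : K →+* ℝ ↦ mk (Complex.ofRealHom.comp r) := by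
  refine mk_ofReal_comp_injective.bijective_of_nat_card_le ?_
  rw [h, ← card_add_two_mul_card_eq_rank, Nat.card_eq_fintype_card,
    card_eq_nrRealPlaces_add_nrComplexPlaces]
  omega

end NumberField.InfinitePlace

namespace NumberField.Units

variable {K : Type*} [Field K] [NumberField K]

open scoped Classical

/-- The shift by `c w₀` accounts for the `w₀` coordinate dropped by `logEmbedding`, which the
product formula recovers (`weightedLogForm_logEmbedding`). -/
noncomputable def weightedLogForm (c : InfinitePlace K → ℝ) : logSpace K →ₗ[ℝ] ℝ :=
  ∑ w, (c w.1 - c w₀) • LinearMap.proj w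

theorem weightedLogForm_single (c : InfinitePlace K → ℝ) (w : {w : InfinitePlace K // w ≠ w₀}) :
    weightedLogForm c (Pi.single w 1) = c w - c w₀ := by
  simp [weightedLogForm, Pi.single_apply]

theorem weightedLogForm_logEmbedding (c : InfinitePlace K → ℝ) (u : (𝓞 K)ˣ) :
    weightedLogForm c (logEmbedding K (Additive.ofMul u)) =
      ∑ w, c w * (mult w * Real.log (w (u : K))) := by
  have h₀ := sum_logEmbedding_component u
  simp only [logEmbedding_component] at h₀
  simp only [weightedLogForm, LinearMap.sum_apply, LinearMap.smul_apply, LinearMap.proj_apply,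
    logEmbedding_component, smul_eq_mul, sub_mul, Finset.sum_sub_distrib, ← Finset.mul_sum, h₀]
  rw [Fintype.sum_eq_add_sum_subtype_ne _ w₀]
  ring

theorem eq_of_weightedLogForm_logEmbedding_eq_zero {c : InfinitePlace K → ℝ}
    (h : ∀ u : (𝓞 K)ˣ, weightedLogForm c (logEmbedding K (Additive.ofMul u)) = 0)
    (w w' : InfinitePlace K) : c w = c w' := by
  have hc : weightedLogForm c = 0 := by
    refine LinearMap.ext_on (unitLattice_span_eq_top K) ?_
    rintro _ ⟨u, -, rfl⟩
    exact h u
  have hw₀ : ∀ w, c w = c w₀ := by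
    intro w
    by_cases hw : w = w₀
    · rw [hw]
    · simpa [sub_eq_zero, hc] using (weightedLogForm_single c ⟨w, hw⟩).symm
  rw [hw₀ w, hw₀ w']

theorem eq_of_sum_mul_log_eq_zero_of_sub_one_mem {c : InfinitePlace K → ℝ} {I : Ideal (𝓞 K)}
    (hI : I ≠ ⊥)
    (h : ∀ u : (𝓞 K)ˣ, (u : 𝓞 K) - 1 ∈ I → ∑ w, c w * (mult w * Real.log (w (u : K))) = 0)
    (w w' : InfinitePlace K) : c w = c w' := by
  have : Finite (𝓞 K ⧸ I) := Ideal.finiteQuotientOfFreeOfNeBot I hI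
  refine eq_of_weightedLogForm_logEmbedding_eq_zero (fun u ↦ ?_) w w'
  obtain ⟨m, hm, hum⟩ := I.exists_pow_sub_one_mem u
  have := h _ hum
  rw [← weightedLogForm_logEmbedding, ofMul_pow, map_nsmul, map_nsmul, smul_eq_zero] at this
  exact this.resolve_left hm.ne'

end NumberField.Units

theorem exists_unit_with_nontrivial_character_general
    (L : Type*) [Field L] [NumberField L] (g : ℕ)
    (σ : Fin g → (L →+* ℝ)) (hσ : Function.Bijective σ)
    (hdeg : Module.finrank ℚ L = g)
    (N : ℕ) (hN : 3 ≤ N)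
    (n : Fin g → ℕ) (hn : ∃ i j, n i ≠ n j) :
    ∃ ε : (𝓞 L)ˣ, ((ε : 𝓞 L) - 1) ∈ Ideal.span {(N : 𝓞 L)} ∧
      ∏ k : Fin g, (σ k ((ε : 𝓞 L) : L)) ^ (n k) ≠ 1 := by
  have hcard : Nat.card (L →+* ℝ) = Module.finrank ℚ L := by
    rw [hdeg, ← Nat.card_eq_of_bijective σ hσ, Nat.card_eq_fintype_card, Fintype.card_fin]
  let e : Fin g ≃ InfinitePlace L :=
    .ofBijective _ ((mk_ofReal_comp_bijective hcard).comp hσ)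
  have hI : Ideal.span {(N : 𝓞 L)} ≠ ⊥ := by
    simpa [Ideal.span_singleton_eq_bot] using (by omega : N ≠ 0)
  by_contra! h
  have hlog : ∀ u : (𝓞 L)ˣ, (u : 𝓞 L) - 1 ∈ Ideal.span {(N : 𝓞 L)} →
      ∑ w, (n (e.symm w) : ℝ) * (mult w * Real.log (w (u : L))) = 0 := by
    intro u hu
    have hσu : ∀ k, σ k (u : L) ≠ 0 := fun k ↦ by simp
    rw [← e.sum_comp]
    simp only [Equiv.symm_apply_apply]
    simp only [e, Equiv.ofBijective_apply, Function.comp_apply,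
      (isReal_mk_ofReal_comp _).mult_eq_one, mk_ofReal_comp_apply, Nat.cast_one, one_mul]
    have := congrArg (fun x ↦ Real.log |x|) (h u hu)
    simpa [Finset.abs_prod, Real.log_prod, hσu, abs_pow, Real.log_pow] using this
  obtain ⟨i, j, hij⟩ := hn
  simpa [hij] using eq_of_sum_mul_log_eq_zero_of_sub_one_mem hI hlog (e i) (e j)

/-- if `g ≥ 2` and `(n₁,…,n_g)` are nonnegative integers not all equal, then
there is a unit `ε ≡ 1 (mod N·O_L)` with `Π_k σ_k(ε)^{n_k} ≠ 1`. -/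
theorem exists_unit_with_nontrivial_character
    (L : Type*) [Field L] [NumberField L] (g : ℕ) (hg : 2 ≤ g)
    (σ : Fin g → (L →+* ℝ)) (hσ : Function.Bijective σ)
    (hdeg : Module.finrank ℚ L = g)
    (N : ℕ) (hN : 3 ≤ N)
    (n : Fin g → ℕ) (hn : ∃ i j, n i ≠ n j) :
    ∃ ε : (𝓞 L)ˣ, ((ε : 𝓞 L) - 1) ∈ Ideal.span {(N : 𝓞 L)} ∧
      ∏ k : Fin g, (σ k ((ε : 𝓞 L) : L)) ^ (n k) ≠ 1 :=
  exists_unit_with_nontrivial_character_general L g σ hσ hdeg N hN n hn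
end
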